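/- arXiv:2204.09842 — 2 statements merged into one kernel-verified Lean document; each statement's English description precedes it below -/
import Mathlib

section
/- For every nonnegative integer t, the graph G = K_{3+t} \vee ((4+2t)K_2) (the join of a complete graph on 3+t vertices with the disjoint union of 4+2t copies of K_2) satisfies \delta(G) = (\alpha(G) + 4)/2, namely \delta(G) = 4 + t and \alpha(G) = 4 + 2t, but G is not a P_{\geq 3}-factor uniform graph. -/
open SimpleGraph

section Defs

variable {V : Type*} {α β : Type*}

/-- A graph is *factor-critical* if deleting any vertex leaves a graph
with a perfect matching. -/
def FactorCritical (G : SimpleGraph V) : Prop :=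
  ∀ v : V, ∃ M : (G.induce {u | u ≠ v}).Subgraph, M.IsPerfectMatching

/-- A *sun* is `K₁`, `K₂`, or a graph obtained from a factor-critical graph `R`
with vertex set `Y = {y₁, …, yₙ}` by adding `n` new vertices `x₁, …, xₙ` and the
pendant edges `y₁x₁, …, yₙxₙ`. -/
def IsSun (G : SimpleGraph V) : Prop :=
  (Nat.card V = 1) ∨ (Nat.card V = 2 ∧ G.Connected) ∨
  (∃ Y : Set V, Y.Nonempty ∧ FactorCritical (G.induce Y) ∧
    ∃ f : (Yᶜ : Set V) ≃ Y, ∀ x : (Yᶜ : Set V), G.neighborSet ↑x = {(↑(f x) : V)})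

/-- `sunCount G` is the number of connected components of `G` that are suns. -/
noncomputable def sunCount (G : SimpleGraph V) : ℕ :=
  Nat.card {c : G.ConnectedComponent // IsSun (G.induce c.supp)}

/-- Number of isolated vertices of a graph. -/
noncomputable def isolatedCount (G : SimpleGraph V) : ℕ :=
  {v : V | ∀ w : V, ¬ G.Adj v w}.ncard

/-- A set of vertices is independent if no two of its vertices are adjacent. -/
def IndepSet (G : SimpleGraph V) (A : Set V) : Prop :=
  A.Pairwise fun u v => ¬ G.Adj u v

/-- The independence number of a graph: the maximum size of an independent set. -/
noncomputable def indepNum (G : SimpleGraph V) : ℕ :=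
  sSup {n | ∃ A : Set V, IndepSet G A ∧ A.ncard = n}

/-- The neighborhood `N_G(A)` of a set `A` of vertices: the union of the
neighborhoods of the vertices of `A`. -/
def neighborSetOf (G : SimpleGraph V) (A : Set V) : Set V :=
  {v | ∃ a ∈ A, G.Adj a v}

/-- `H` is a `P_{≥3}`-factor of `G`: a spanning subgraph of `G` each of whose
connected components is a path on at least `3` vertices. -/
def IsPathFactor (G H : SimpleGraph V) : Prop :=
  H ≤ G ∧ ∀ c : H.ConnectedComponent,
    ∃ n : ℕ, 3 ≤ n ∧ Nonempty ((H.induce c.supp) ≃g pathGraph n)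

/-- A connected graph `G` is a `P_{≥3}`-factor covered graph if every edge of `G`
is contained in some `P_{≥3}`-factor of `G`. -/
def PathFactorCovered (G : SimpleGraph V) : Prop :=
  G.Connected ∧ ∀ e ∈ G.edgeSet, ∃ H : SimpleGraph V, IsPathFactor G H ∧ e ∈ H.edgeSet

/-- A graph `G` is a `P_{≥3}`-factor uniform graph if `G - e` is a
`P_{≥3}`-factor covered graph for every edge `e` of `G`. -/
def PathFactorUniform (G : SimpleGraph V) : Prop :=
  ∀ e ∈ G.edgeSet, PathFactorCovered (G.deleteEdges {e})

/-- The parameter `ε(X)` from Zhou–Zhang's characterization of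
`P_{≥3}`-factor covered graphs. -/
noncomputable def eps (G : SimpleGraph V) (X : Set V) : ℕ := by
  classical
  exact if ¬ IndepSet G X then 2
    else if X.Nonempty ∧ ∃ c : (G.induce Xᶜ).ConnectedComponent,
        ¬ IsSun ((G.induce Xᶜ).induce c.supp) then 1
    else 0

/-- A graph is 2-edge-connected if it is connected and stays connected after
the deletion of any single edge. -/
def TwoEdgeConnected (G : SimpleGraph V) : Prop :=
  G.Connected ∧ ∀ e ∈ G.edgeSet, (G.deleteEdges {e}).Connected

/-- A graph is `k`-connected if it has more than `k` vertices and remains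
connected after deleting any fewer than `k` vertices. -/
def KConnected [Fintype V] (k : ℕ) (G : SimpleGraph V) : Prop :=
  k < Fintype.card V ∧ ∀ S : Set V, S.ncard < k → (G.induce Sᶜ).Connected

/-- The join `G₁ ∨ G₂` of two graphs: take disjoint copies of `G₁` and `G₂`
and add all edges between them. -/
def graphJoin (G : SimpleGraph α) (H : SimpleGraph β) : SimpleGraph (α ⊕ β) where
  Adj x y :=
    match x, y with
    | Sum.inl a, Sum.inl b => G.Adj a b
    | Sum.inr a, Sum.inr b => H.Adj a b
    | Sum.inl _, Sum.inr _ => True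
    | Sum.inr _, Sum.inl _ => True
  symm := by
    constructor
    rintro (a | a) (b | b) h
    · exact G.adj_symm h
    · trivial
    · trivial
    · exact H.adj_symm h
  loopless := by
    constructor
    rintro (a | a) h
    · exact G.irrefl h
    · exact H.irrefl h

/-- The disjoint union of two graphs. -/
def graphSum (G : SimpleGraph α) (H : SimpleGraph β) : SimpleGraph (α ⊕ β) where
  Adj x y :=
    match x, y with
    | Sum.inl a, Sum.inl b => G.Adj a b
    | Sum.inr a, Sum.inr b => H.Adj a b
    | _, _ => False
  symm := by
    constructor
    rintro (a | a) (b | b) h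
    · exact G.adj_symm h
    · exact h.elim
    · exact h.elim
    · exact H.adj_symm h
  loopless := by
    constructor
    rintro (a | a) h
    · exact G.irrefl h
    · exact H.irrefl h

/-- `mK2 m` is the disjoint union of `m` copies of `K₂`. -/
def mK2 (m : ℕ) : SimpleGraph (Fin m × Fin 2) where
  Adj p q := p.1 = q.1 ∧ p.2 ≠ q.2
  symm := by constructor; rintro p q ⟨h1, h2⟩; exact ⟨h1.symm, h2.symm⟩
  loopless := by constructor; rintro p ⟨h1, h2⟩; exact h2 rfl

end Defs

/-! Delete the edge of one copy of `K₂` and suppose a `P_{≥3}`-factor `H` of the rest contains an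
edge inside the clique `K_{3+t}`. Every vertex has `H`-degree 1 or 2, and no component of `H` is a
single edge, so every copy of `K₂` sends at least one `H`-edge to the clique, and the damaged copy
at least two: there are at least `5 + 2t` such edges. On the clique side, `3 + t` vertices of
`H`-degree at most 2 with one `H`-edge among them leave room for at most `4 + 2t` of them. -/

open Finset

namespace SimpleGraph

variable {n : ℕ}

instance : DecidableRel (pathGraph n).Adj := fun _ _ => decidable_of_iff' _ pathGraph_adj

theorem pathGraph_degree_le_two (j : Fin n) : (pathGraph n).degree j ≤ 2 := by
  have hsub : ((pathGraph n).neighborFinset j).map Fin.valEmbedding ⊆ {j.val - 1, j.val + 1} := by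
    intro x
    simp only [mem_map, mem_neighborFinset, pathGraph_adj, Fin.valEmbedding_apply, mem_insert,
      mem_singleton]
    omega
  simpa using (card_le_card hsub).trans card_le_two

theorem pathGraph_degree_pos (hn : 2 ≤ n) (j : Fin n) : 0 < (pathGraph n).degree j := by
  rw [degree_pos_iff_exists_adj]
  by_cases hj : j.val + 1 < n
  · exact ⟨⟨j + 1, hj⟩, pathGraph_adj.2 (Or.inl rfl)⟩
  · exact ⟨⟨j - 1, by omega⟩, pathGraph_adj.2 (Or.inr (by simp; omega))⟩

theorem two_le_degree_of_adj {V : Type*} {G : SimpleGraph V} {v a b : V}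
    [Fintype (G.neighborSet v)] (ha : G.Adj v a) (hb : G.Adj v b) (hab : a ≠ b) :
    2 ≤ G.degree v := by
  rw [← card_neighborFinset_eq_degree]
  exact one_lt_card.2 ⟨a, by simpa, b, by simpa, hab⟩

theorem pathGraph_three_le_degree_add_degree (hn : 3 ≤ n) {j k : Fin n}
    (h : (pathGraph n).Adj j k) : 3 ≤ (pathGraph n).degree j + (pathGraph n).degree k := by
  wlog hjk : j.val + 1 = k.val generalizing j k
  · rw [add_comm]
    exact this h.symm ((pathGraph_adj.1 h).resolve_left hjk)
  have hj := pathGraph_degree_pos (by omega) j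
  have hk := pathGraph_degree_pos (by omega) k
  by_cases hj0 : j.val = 0
  · have : 2 ≤ (pathGraph n).degree k :=
      two_le_degree_of_adj h.symm (b := ⟨k + 1, by omega⟩) (pathGraph_adj.2 (Or.inl rfl))
        (by simp [Fin.ext_iff]; omega)
    omega
  · have : 2 ≤ (pathGraph n).degree j :=
      two_le_degree_of_adj h (b := ⟨j - 1, by omega⟩) (pathGraph_adj.2 (Or.inr (by simp; omega)))
        (by simp [Fin.ext_iff]; omega)
    omega

theorem degree_eq_degree_of_iso_induce_supp {V W : Type*} [Fintype V] {H : SimpleGraph V}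
    [DecidableRel H.Adj] {G : SimpleGraph W} [∀ w, Fintype (G.neighborSet w)]
    {c : H.ConnectedComponent} (φ : H.induce c.supp ≃g G) {v : V} (hv : v ∈ c.supp) :
    H.degree v = G.degree (φ ⟨v, hv⟩) := by
  classical
  rw [Iso.degree_eq, degree_induce_of_neighborSet_subset]
  exact fun w hw => c.mem_supp_of_adj_mem_supp hv hw

end SimpleGraph

namespace IsPathFactor

variable {V : Type*} [Fintype V] {G H : SimpleGraph V} [DecidableRel H.Adj]

theorem degree_le_two (hH : IsPathFactor G H) (v : V) : H.degree v ≤ 2 := by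
  obtain ⟨n, -, ⟨φ⟩⟩ := hH.2 (H.connectedComponentMk v)
  rw [degree_eq_degree_of_iso_induce_supp φ rfl]
  exact pathGraph_degree_le_two _

theorem degree_pos (hH : IsPathFactor G H) (v : V) : 0 < H.degree v := by
  obtain ⟨n, hn, ⟨φ⟩⟩ := hH.2 (H.connectedComponentMk v)
  rw [degree_eq_degree_of_iso_induce_supp φ rfl]
  exact pathGraph_degree_pos (by omega) _

theorem three_le_degree_add_degree (hH : IsPathFactor G H) {u v : V} (huv : H.Adj u v) :
    3 ≤ H.degree u + H.degree v := by
  obtain ⟨n, hn, ⟨φ⟩⟩ := hH.2 (H.connectedComponentMk u)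
  have hv : v ∈ (H.connectedComponentMk u).supp :=
    (H.connectedComponentMk u).mem_supp_of_adj_mem_supp rfl huv
  rw [degree_eq_degree_of_iso_induce_supp φ rfl, degree_eq_degree_of_iso_induce_supp φ hv]
  exact pathGraph_three_le_degree_add_degree hn (φ.map_adj_iff.2 huv)

end IsPathFactor

section SumType

variable {α β : Type*} [Fintype α] [Fintype β]

namespace SimpleGraph

theorem degree_eq_card_adj_inl_add_card_adj_inr (H : SimpleGraph (α ⊕ β)) [DecidableRel H.Adj]
    (v : α ⊕ β) : H.degree v = #{a | H.Adj v (.inl a)} + #{b | H.Adj v (.inr b)} := by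
  rw [← card_neighborFinset_eq_degree, neighborFinset_eq_filter, card_filter, card_filter,
    card_filter, Fintype.sum_sum_type]

theorem sum_card_inl_adj_inr_eq_sum_card_inr_adj_inl (H : SimpleGraph (α ⊕ β))
    [DecidableRel H.Adj] :
    ∑ a, #{b | H.Adj (.inl a) (.inr b)} = ∑ b, #{a | H.Adj (.inr b) (.inl a)} := by
  simp only [card_filter]
  rw [sum_comm]
  simp only [H.adj_comm]

theorem sum_card_inr_adj_inl_add_two_le (H : SimpleGraph (α ⊕ β)) [DecidableRel H.Adj]
    (hdeg : ∀ a, H.degree (.inl a) ≤ 2) {a₁ a₂ : α} (h : H.Adj (.inl a₁) (.inl a₂)) :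
    ∑ b, #{a | H.Adj (.inr b) (.inl a)} + 2 ≤ 2 * Fintype.card α := by
  classical
  rw [← sum_card_inl_adj_inr_eq_sum_card_inr_adj_inl]
  have hdeg_sum : ∑ a, (#{a' | H.Adj (.inl a) (.inl a')} + #{b | H.Adj (.inl a) (.inr b)})
      ≤ 2 * Fintype.card α := by
    simp_rw [← degree_eq_card_adj_inl_add_card_adj_inr]
    calc ∑ a, H.degree (.inl a) ≤ ∑ _a : α, 2 := sum_le_sum fun a _ => hdeg a
      _ = 2 * Fintype.card α := by simp [mul_comm]
  have hinner : 2 ≤ ∑ a, #{a' | H.Adj (.inl a) (.inl a')} := by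
    have h₁ : 0 < #{a' | H.Adj (.inl a₁) (.inl a')} := card_pos.2 ⟨a₂, by simpa using h⟩
    have h₂ : 0 < #{a' | H.Adj (.inl a₂) (.inl a')} := card_pos.2 ⟨a₁, by simpa using h.symm⟩
    calc 2 ≤ ∑ a ∈ {a₁, a₂}, #{a' | H.Adj (.inl a) (.inl a')} := by
          rw [sum_pair (by rintro rfl; exact h.ne rfl)]
          omega
      _ ≤ _ := sum_le_sum_of_subset (subset_univ _)
  rw [sum_add_distrib] at hdeg_sum
  omega

end SimpleGraph

theorem graphJoin_degree_inl (G : SimpleGraph α) (H : SimpleGraph β) [DecidableRel G.Adj]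
    [DecidableRel (graphJoin G H).Adj] (a : α) :
    (graphJoin G H).degree (.inl a) = G.degree a + Fintype.card β := by
  rw [degree_eq_card_adj_inl_add_card_adj_inr, ← card_neighborFinset_eq_degree,
    neighborFinset_eq_filter]
  congr 1
  · exact congrArg card (filter_congr fun _ _ => Iff.rfl)
  · rw [filter_true_of_mem (p := fun b => (graphJoin G H).Adj (.inl a) (.inr b))
      fun _ _ => trivial, card_univ]

theorem graphJoin_degree_inr (G : SimpleGraph α) (H : SimpleGraph β) [DecidableRel H.Adj]
    [DecidableRel (graphJoin G H).Adj] (b : β) :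
    (graphJoin G H).degree (.inr b) = Fintype.card α + H.degree b := by
  rw [degree_eq_card_adj_inl_add_card_adj_inr, ← card_neighborFinset_eq_degree,
    neighborFinset_eq_filter]
  congr 1
  · rw [filter_true_of_mem (p := fun a => (graphJoin G H).Adj (.inr b) (.inl a))
      fun _ _ => trivial, card_univ]
  · exact congrArg card (filter_congr fun _ _ => Iff.rfl)

end SumType

theorem mK2_degree {m : ℕ} [DecidableRel (mK2 m).Adj] (p : Fin m × Fin 2) :
    (mK2 m).degree p = 1 := by
  rw [degree_eq_one_iff_existsUnique_adj]
  refine ⟨(p.1, p.2.rev), ⟨rfl, by simp [Fin.ext_iff]; omega⟩, ?_⟩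
  rintro ⟨j, y⟩ ⟨rfl, hy⟩
  simp only [Prod.mk.injEq, true_and, Fin.ext_iff, Fin.val_rev] at hy ⊢
  omega

theorem minDegree_completeGraph_join_mK2 (s : ℕ) {m : ℕ} (hm : 0 < m)
    [DecidableRel (graphJoin (completeGraph (Fin s)) (mK2 m)).Adj] :
    (graphJoin (completeGraph (Fin s)) (mK2 m)).minDegree = s + 1 := by
  classical
  have hinr : ∀ p, (graphJoin (completeGraph (Fin s)) (mK2 m)).degree (.inr p) = s + 1 := by
    intro p
    rw [graphJoin_degree_inr, mK2_degree, Fintype.card_fin]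
  have : Nonempty (Fin s ⊕ Fin m × Fin 2) := ⟨.inr (⟨0, hm⟩, 0)⟩
  refine le_antisymm ((minDegree_le_degree _ (.inr (⟨0, hm⟩, 0))).trans_eq (hinr _))
    (le_minDegree_of_forall_le_degree _ _ ?_)
  rintro (a | p)
  · rw [graphJoin_degree_inl, complete_graph_degree]
    simp only [Fintype.card_prod, Fintype.card_fin]
    omega
  · exact (hinr p).ge

namespace IndepSet

variable {α β : Type*} {G : SimpleGraph α} {H : SimpleGraph β}

theorem subset_range_inl_or_subset_range_inr {A : Set (α ⊕ β)}
    (hA : IndepSet (graphJoin G H) A) : A ⊆ Set.range Sum.inl ∨ A ⊆ Set.range Sum.inr := by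
  rw [or_iff_not_imp_left, Set.not_subset]
  rintro ⟨x, hxA, hx⟩ y hyA
  rcases x with a | b
  · exact absurd ⟨a, rfl⟩ hx
  rcases y with a | b'
  · exact (hA hxA hyA Sum.inr_ne_inl trivial).elim
  · exact ⟨b', rfl⟩

theorem ncard_le_of_graphJoin {k : ℕ} (hG : ∀ A, IndepSet G A → A.ncard ≤ k)
    (hH : ∀ B, IndepSet H B → B.ncard ≤ k) {A : Set (α ⊕ β)}
    (hA : IndepSet (graphJoin G H) A) : A.ncard ≤ k := by
  rcases hA.subset_range_inl_or_subset_range_inr with hl | hr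
  · rw [← Set.ncard_preimage_of_injective_subset_range Sum.inl_injective hl]
    exact hG _ fun _ ha _ hb hab => hA ha hb (Sum.inl_injective.ne hab)
  · rw [← Set.ncard_preimage_of_injective_subset_range Sum.inr_injective hr]
    exact hH _ fun _ ha _ hb hab => hA ha hb (Sum.inr_injective.ne hab)

theorem ncard_le_one_of_completeGraph [Finite α] {A : Set α}
    (hA : IndepSet (completeGraph α) A) : A.ncard ≤ 1 :=
  (Set.ncard_le_one_iff).2 fun ha hb => by_contra fun h => hA ha hb h h

theorem ncard_le_of_mK2 {m : ℕ} {A : Set (Fin m × Fin 2)} (hA : IndepSet (mK2 m) A) :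
    A.ncard ≤ m := by
  have hinj : Set.InjOn Prod.fst A := by
    rintro ⟨i, x⟩ hx ⟨j, y⟩ hy (rfl : i = j)
    by_contra hne
    exact hA hx hy hne ⟨rfl, fun h => hne (Prod.ext rfl h)⟩
  simpa [Set.ncard_univ] using Set.ncard_le_ncard_of_injOn _ (fun _ _ => Set.mem_univ _) hinj

end IndepSet

theorem indepNum_completeGraph_join_mK2 (s : ℕ) {m : ℕ} (hm : 0 < m) :
    _root_.indepNum (graphJoin (completeGraph (Fin s)) (mK2 m)) = m := by
  refine IsGreatest.csSup_eq ⟨⟨Set.range fun i => .inr (i, 0), ?_, ?_⟩, ?_⟩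
  · rintro _ ⟨i, rfl⟩ _ ⟨j, rfl⟩ _ ⟨-, h⟩
    exact h rfl
  · rw [Set.ncard_range_of_injective (fun i j h => by simpa using h), Nat.card_eq_fintype_card,
      Fintype.card_fin]
  · rintro _ ⟨A, hA, rfl⟩
    exact hA.ncard_le_of_graphJoin (fun _ hB => hB.ncard_le_one_of_completeGraph.trans hm)
      fun _ hB => hB.ncard_le_of_mK2

section PathFactorJoinMK2

variable {α : Type*} {G : SimpleGraph α} {m : ℕ}
  {H : SimpleGraph (α ⊕ Fin m × Fin 2)} [DecidableRel H.Adj]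

theorem card_inr_adj_inr_le_of_le_graphJoin_mK2 (hHJ : H ≤ graphJoin G (mK2 m)) (j : Fin m)
    {x y : Fin 2} (hxy : x ≠ y) :
    #{b | H.Adj (.inr (j, x)) (.inr b)} ≤ if H.Adj (.inr (j, x)) (.inr (j, y)) then 1 else 0 := by
  have hsub : ({b | H.Adj (.inr (j, x)) (.inr b)} : Finset (Fin m × Fin 2)) ⊆
      if H.Adj (.inr (j, x)) (.inr (j, y)) then {(j, y)} else ∅ := by
    rintro ⟨k, z⟩ hb
    rw [mem_filter] at hb
    obtain ⟨rfl, hxz⟩ : j = k ∧ x ≠ z := hHJ hb.2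
    obtain rfl : z = y := by simp only [ne_eq, Fin.ext_iff] at hxy hxz ⊢; omega
    simp [hb.2]
  refine (card_le_card hsub).trans ?_
  split_ifs <;> simp

theorem IsPathFactor.ite_le_card_inr_adj_inl [Fintype α] {G' : SimpleGraph (α ⊕ Fin m × Fin 2)}
    (hH : IsPathFactor G' H) (hHJ : H ≤ graphJoin G (mK2 m)) (j : Fin m) :
    (if H.Adj (.inr (j, 0)) (.inr (j, 1)) then 1 else 2) ≤
      ∑ x, #{a | H.Adj (.inr (j, x)) (.inl a)} := by
  have h₀ := card_inr_adj_inr_le_of_le_graphJoin_mK2 hHJ j (x := 0) (y := 1) (by decide)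
  have h₁ := card_inr_adj_inr_le_of_le_graphJoin_mK2 hHJ j (x := 1) (y := 0) (by decide)
  have hd₀ := degree_eq_card_adj_inl_add_card_adj_inr H (.inr (j, 0))
  have hd₁ := degree_eq_card_adj_inl_add_card_adj_inr H (.inr (j, 1))
  rw [Fin.sum_univ_two]
  by_cases hadj : H.Adj (.inr (j, 0)) (.inr (j, 1))
  · rw [if_pos hadj] at h₀ ⊢
    rw [if_pos hadj.symm] at h₁
    have := hH.three_le_degree_add_degree hadj
    omega
  · rw [if_neg hadj] at h₀ ⊢
    rw [if_neg fun h => hadj h.symm] at h₁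
    have := hH.degree_pos (.inr (j, 0))
    have := hH.degree_pos (.inr (j, 1))
    omega

theorem IsPathFactor.add_one_le_sum_card_inr_adj_inl [Fintype α]
    {G' : SimpleGraph (α ⊕ Fin m × Fin 2)}
    (hH : IsPathFactor G' H) (hHJ : H ≤ graphJoin G (mK2 m)) {i : Fin m}
    (hi : ¬ H.Adj (.inr (i, 0)) (.inr (i, 1))) :
    m + 1 ≤ ∑ b, #{a | H.Adj (.inr b) (.inl a)} := by
  rw [Fintype.sum_prod_type, ← add_sum_erase _ _ (mem_univ i)]
  have hpair_i := hH.ite_le_card_inr_adj_inl hHJ i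
  rw [if_neg hi] at hpair_i
  have hrest : m - 1 ≤ ∑ j ∈ univ.erase i, ∑ x, #{a | H.Adj (.inr (j, x)) (.inl a)} :=
    calc m - 1 = ∑ j ∈ univ.erase i, 1 := by simp [card_erase_of_mem]
      _ ≤ _ := sum_le_sum fun j _ =>
        (by split_ifs <;> omega : 1 ≤ _).trans (hH.ite_le_card_inr_adj_inl hHJ j)
  have := i.pos
  omega

theorem not_pathFactorUniform_graphJoin_mK2 [Fintype α] (G : SimpleGraph α)
    (hG : G.edgeSet.Nonempty) (hm : 2 * Fintype.card α ≤ m + 2) :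
    ¬ PathFactorUniform (graphJoin G (mK2 m)) := by
  classical
  intro hJ
  obtain ⟨⟨a₁, a₂⟩, hadj⟩ := hG
  have : 1 < Fintype.card α := Fintype.one_lt_card_iff.2 ⟨a₁, a₂, G.ne_of_adj hadj⟩
  let i : Fin m := ⟨0, by omega⟩
  have he : s(.inr (i, 0), .inr (i, 1)) ∈ (graphJoin G (mK2 m)).edgeSet :=
    ⟨rfl, (by decide : (0 : Fin 2) ≠ 1)⟩
  have hf : s(.inl a₁, .inl a₂) ∈
      ((graphJoin G (mK2 m)).deleteEdges {s(.inr (i, 0), .inr (i, 1))}).edgeSet := by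
    rw [mem_edgeSet, deleteEdges_adj]
    exact ⟨hadj, by simp⟩
  obtain ⟨H, hH, hHf⟩ := (hJ _ he).2 _ hf
  have hHJ : H ≤ graphJoin G (mK2 m) := hH.1.trans (deleteEdges_le _)
  have hi : ¬ H.Adj (.inr (i, 0)) (.inr (i, 1)) := fun h => (deleteEdges_adj.1 (hH.1 h)).2 rfl
  have hlower := hH.add_one_le_sum_card_inr_adj_inl hHJ hi
  have hupper := sum_card_inr_adj_inl_add_two_le H (fun _ => hH.degree_le_two _) hHf
  omega

end PathFactorJoinMK2

/-- **Remark 1.** For every `t ≥ 0`, the graph `G = K_{3+t} ∨ ((4+2t)K₂)` satisfies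
`δ(G) = 4 + t`, `α(G) = 4 + 2t` (hence `δ(G) = (α(G) + 4)/2`), but `G` is not a
`P_{≥3}`-factor uniform graph. -/
theorem stmt4 (t : ℕ) :
    letI G := graphJoin (completeGraph (Fin (3 + t))) (mK2 (4 + 2 * t))
    @SimpleGraph.minDegree _ G _ (Classical.decRel _) = 4 + t ∧
    _root_.indepNum G = 4 + 2 * t ∧
    ((4 + t : ℝ) = ((4 + 2 * t : ℝ) + 4) / 2) ∧
    ¬ PathFactorUniform G := by
  classical
  refine ⟨(minDegree_completeGraph_join_mK2 _ (by omega)).trans (by omega),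
    indepNum_completeGraph_join_mK2 _ (by omega), by ring,
    not_pathFactorUniform_graphJoin_mK2 _ ⟨s(0, 1), by simp; omega⟩ (by simp; omega)⟩
end

section
/- Let G be a graph, let e be an edge of G, and let X be a vertex subset of G - e. Then sun(G - X) \geq sun((G - e) - X) - 2, and consequently \alpha(G) \geq sun((G - e) - X) - 2, where \alpha(G) is the independence number of G. -/
open SimpleGraph

/-!
Let `H = (G - e) - X ≤ G - X`. Every edge of `G - X` missing from `H` has an endpoint in
the set `T` of endpoints of `e`, which has at most two elements. A component of `H` that avoids
`T` is therefore closed under adjacency in `G - X`, so it is also a component of `G - X`, inducing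
the same graph there; hence every sun component of `H`, except the at most two meeting `T`, is a
sun component of `G - X`. Finally, one vertex from each component of `G - X` gives an
independent set of `G`.
-/

theorem Sym2.ncard_setOf_mem_le_two {α : Type*} (e : Sym2 α) : {v | v ∈ e}.ncard ≤ 2 := by
  induction e using Sym2.ind with
  | h a b =>
    have hab : {v | v ∈ s(a, b)} = {a, b} := by ext; simp
    rw [hab]
    exact (Set.ncard_insert_le a {b}).trans (by rw [Set.ncard_singleton])

namespace SimpleGraph

variable {W : Type*}

section EdgeDeletion

variable {G H : SimpleGraph W} {T : Set W}

theorem induce_eq_of_disjoint (hHG : H ≤ G) (hT : ∀ a b, G.Adj a b → ¬ H.Adj a b → a ∈ T)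
    {s : Set W} (hs : Disjoint s T) : G.induce s = H.induce s := by
  ext a b
  refine ⟨fun hab => ?_, fun hab => hHG hab⟩
  by_contra hH
  exact Set.disjoint_left.mp hs a.2 (hT a b hab hH)

theorem ConnectedComponent.supp_map_ofLE_of_disjoint (hHG : H ≤ G)
    (hT : ∀ a b, G.Adj a b → ¬ H.Adj a b → a ∈ T) {c : H.ConnectedComponent}
    (hc : Disjoint c.supp T) : (c.map (Hom.ofLE hHG)).supp = c.supp := by
  induction c using ConnectedComponent.ind with | h a => ?_
  ext b
  simp only [ConnectedComponent.mem_supp_iff, ConnectedComponent.map_mk, Hom.ofLE_apply,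
    ConnectedComponent.eq]
  refine ⟨fun hba => ?_, fun hba => hba.mono hHG⟩
  have hclosed : ∀ x y, G.Adj x y → H.Reachable x a → H.Reachable y a := fun x y hxy hxa => by
    by_cases hH : H.Adj x y
    · exact hH.reachable.symm.trans hxa
    · exact absurd (hT x y hxy hH) (Set.disjoint_left.mp hc (ConnectedComponent.eq.mpr hxa))
  rw [reachable_iff_reflTransGen] at hba
  induction hba using Relation.ReflTransGen.head_induction_on with
  | refl => rfl
  | head hxy _ ih => exact hclosed _ _ hxy.symm ih

theorem sunCount_le_sunCount_add_ncard [Finite W] (hHG : H ≤ G)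
    (hT : ∀ a b, G.Adj a b → ¬ H.Adj a b → a ∈ T) :
    sunCount H ≤ sunCount G + T.ncard := by
  set away := {c : H.ConnectedComponent | IsSun (H.induce c.supp) ∧ Disjoint c.supp T}
  set meeting := {c : H.ConnectedComponent | ¬ Disjoint c.supp T}
  have haway : away.ncard ≤ sunCount G := by
    refine Set.ncard_le_ncard_of_injOn (t := {d : G.ConnectedComponent | IsSun (G.induce d.supp)})
      (fun c : H.ConnectedComponent => c.map (Hom.ofLE hHG)) (fun c hc => ?_)
      (fun c hc c' hc' hcc' => ?_)
    · change IsSun (G.induce (c.map (Hom.ofLE hHG)).supp)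
      rw [ConnectedComponent.supp_map_ofLE_of_disjoint hHG hT hc.2,
        induce_eq_of_disjoint hHG hT hc.2]
      exact hc.1
    · rw [← ConnectedComponent.supp_inj,
        ← ConnectedComponent.supp_map_ofLE_of_disjoint hHG hT hc.2,
        ← ConnectedComponent.supp_map_ofLE_of_disjoint hHG hT hc'.2]
      exact congrArg _ hcc'
  have hmeeting : meeting.ncard ≤ T.ncard := by
    refine (Set.ncard_le_ncard fun c hc => ?_).trans
      (Set.ncard_image_le (f := H.connectedComponentMk))
    obtain ⟨a, hac, haT⟩ := Set.not_disjoint_iff.mp hc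
    exact ⟨a, haT, hac⟩
  calc sunCount H = {c : H.ConnectedComponent | IsSun (H.induce c.supp)}.ncard := rfl
    _ ≤ (away ∪ meeting).ncard := Set.ncard_le_ncard fun c hc => by
        by_cases h : Disjoint c.supp T
        exacts [Or.inl ⟨hc, h⟩, Or.inr h]
    _ ≤ away.ncard + meeting.ncard := Set.ncard_union_le _ _
    _ ≤ sunCount G + T.ncard := add_le_add haway hmeeting

end EdgeDeletion

theorem sunCount_induce_deleteEdges_singleton_le [Finite W] (G : SimpleGraph W)
    (e : Sym2 W) (s : Set W) :
    sunCount ((G.deleteEdges {e}).induce s) ≤ sunCount (G.induce s) + 2 := by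
  set T := {x : s | (x : W) ∈ e}
  have hT : ∀ a b, (G.induce s).Adj a b → ¬ ((G.deleteEdges {e}).induce s).Adj a b →
      a ∈ T := by
    intro a b hab hdel
    have hsab : s((a : W), b) = e := by
      by_contra hne
      exact hdel (deleteEdges_adj.mpr ⟨hab, hne⟩)
    change (a : W) ∈ e
    exact hsab ▸ Sym2.mem_mk_left _ _
  have hT2 : T.ncard ≤ 2 :=
    (Set.ncard_le_ncard_of_injOn Subtype.val (fun _ hx => hx) Subtype.val_injective.injOn).trans
      (Sym2.ncard_setOf_mem_le_two e)
  calc sunCount ((G.deleteEdges {e}).induce s)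
      ≤ sunCount (G.induce s) + T.ncard :=
        sunCount_le_sunCount_add_ncard (comap_monotone _ (deleteEdges_le _)) hT
    _ ≤ sunCount (G.induce s) + 2 := by omega

theorem ncard_le_indepNum [Finite W] {G : SimpleGraph W} {A : Set W} (hA : IndepSet G A) :
    A.ncard ≤ _root_.indepNum G := by
  refine le_csSup ⟨Nat.card W, ?_⟩ ⟨A, hA, rfl⟩
  rintro n ⟨B, -, rfl⟩
  exact Set.ncard_le_card B

theorem card_connectedComponent_induce_le_indepNum [Finite W] (G : SimpleGraph W) (s : Set W) :
    Nat.card (G.induce s).ConnectedComponent ≤ _root_.indepNum G := by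
  choose rep hrep using fun c : (G.induce s).ConnectedComponent => c.exists_rep
  have hinj : Function.Injective fun c => (rep c : W) := fun c d h => by
    rw [← hrep c, ← hrep d, Subtype.ext h]
  have hindep : IndepSet G (Set.range fun c => (rep c : W)) := by
    rintro _ ⟨c, rfl⟩ _ ⟨d, rfl⟩ hne hadj
    have hcd : c = d := by
      rw [← hrep c, ← hrep d]
      exact ConnectedComponent.connectedComponentMk_eq_of_adj (G := G.induce s) hadj
    exact hne (by rw [hcd])
  calc Nat.card (G.induce s).ConnectedComponent
      = (Set.range fun c => (rep c : W)).ncard := (Set.ncard_range_of_injective hinj).symm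
    _ ≤ _root_.indepNum G := ncard_le_indepNum hindep

theorem sunCount_le_card_connectedComponent [Finite W] (G : SimpleGraph W) :
    sunCount G ≤ Nat.card G.ConnectedComponent :=
  Finite.card_subtype_le _

end SimpleGraph

theorem stmt15_general {V : Type*} [Fintype V] (G : SimpleGraph V)
    (e : Sym2 V) (X : Set V) :
    (sunCount (G.induce Xᶜ) : ℤ) ≥
      (sunCount ((G.deleteEdges {e}).induce Xᶜ) : ℤ) - 2 ∧
    (_root_.indepNum G : ℤ) ≥
      (sunCount ((G.deleteEdges {e}).induce Xᶜ) : ℤ) - 2 := by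
  have hdel := sunCount_induce_deleteEdges_singleton_le G e Xᶜ
  have hindep : sunCount (G.induce Xᶜ) ≤ _root_.indepNum G :=
    (sunCount_le_card_connectedComponent _).trans
      (card_connectedComponent_induce_le_indepNum G Xᶜ)
  omega

/-- Deleting one edge creates at most two new sun components:
`sun(G - X) ≥ sun((G - e) - X) - 2`, and consequently
`α(G) ≥ sun((G - e) - X) - 2`. -/
theorem stmt15 {V : Type*} [Fintype V] (G : SimpleGraph V)
    (e : Sym2 V) (he : e ∈ G.edgeSet) (X : Set V) :
    (sunCount (G.induce Xᶜ) : ℤ) ≥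
      (sunCount ((G.deleteEdges {e}).induce Xᶜ) : ℤ) - 2 ∧
    (_root_.indepNum G : ℤ) ≥
      (sunCount ((G.deleteEdges {e}).induce Xᶜ) : ℤ) - 2 :=
  stmt15_general G e X
end
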